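/- Let (x₁, y₁, z₁) and (x₂, y₂, z₂) be orthonormal frames in ℝ³, let r ∈ ℝ³ with r ≠ 0, write u = r/|r|, let σ ∈ {−1, +1}, and let η, μ > 0 be real constants with μ > η/2. Define F(r, x₂, y₂, x₁) = σ·η·(u·x₂)(u·y₂) + μ·(x₁·y₂) (and correspondingly with z in place of y, and with (−r, x₁, ·, x₂) in place of (r, x₂, ·, x₁)). Then (x₁·y₂)·F(r,x₂,y₂,x₁) + (x₂·y₁)·F(−r,x₁,y₁,x₂) + (x₁·z₂)·F(r,x₂,z₂,x₁) + (x₂·z₁)·F(−r,x₁,z₁,x₂) ≥ 0. -/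

import Mathlib

open RealInnerProductSpace

/-- An orthonormal frame in ℝ³: an ordered triple of pairwise orthogonal unit vectors. -/
def IsONFrame (x y z : EuclideanSpace ℝ (Fin 3)) : Prop :=
  ‖x‖ = 1 ∧ ‖y‖ = 1 ∧ ‖z‖ = 1 ∧ ⟪x, y⟫ = 0 ∧ ⟪x, z⟫ = 0 ∧ ⟪y, z⟫ = 0

/-- The rectilinear interaction term
`F(r, x₂, y₂, x₁) = σ η (r/|r| · x₂)(r/|r| · y₂) + μ (x₁ · y₂)`. -/
noncomputable def Frect (σ η μ : ℝ) (r x₂ y₂ x₁ : EuclideanSpace ℝ (Fin 3)) : ℝ :=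
  σ * η * (⟪‖r‖⁻¹ • r, x₂⟫ * ⟪‖r‖⁻¹ • r, y₂⟫) + μ * ⟪x₁, y₂⟫

/-
Write u = r/|r|, k = x₁·x₂, a = u·x₁ and p = u·x₂. Parseval's identity in each frame collapses
the sum to σ η S + 2μ(1 − k²) with S = 2ap − k(a² + p²). Nonnegativity of the Gram determinant
of u, x₁, x₂ gives 1 − k² ∓ S ≥ (1 ± k)(p ∓ a)² ≥ 0, so |σ η S| ≤ η(1 − k²) < 2μ(1 − k²).
-/

section Parseval

variable {ι E : Type*} [Fintype ι] [NormedAddCommGroup E] [InnerProductSpace ℝ E]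
  [FiniteDimensional ℝ E]

theorem Orthonormal.sum_inner_mul_inner_of_card_eq_finrank {v : ι → E} (hv : Orthonormal ℝ v)
    (card_eq : Fintype.card ι = Module.finrank ℝ E) (a b : E) :
    ∑ i, ⟪a, v i⟫ * ⟪v i, b⟫ = ⟪a, b⟫ := by
  simpa using (OrthonormalBasis.mk hv
    (hv.linearIndependent.span_eq_top_of_card_eq_finrank' card_eq).ge).sum_inner_mul_inner a b

end Parseval

theorem IsONFrame.orthonormal {x y z : EuclideanSpace ℝ (Fin 3)} (h : IsONFrame x y z) :
    Orthonormal ℝ ![x, y, z] := by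
  obtain ⟨hx, hy, hz, hxy, hxz, hyz⟩ := h
  simp [Fin.forall_fin_succ, hx, hy, hz, hxy, hxz, hyz]

theorem IsONFrame.inner_mul_inner_add_inner_mul_inner {x y z : EuclideanSpace ℝ (Fin 3)}
    (h : IsONFrame x y z) (a b : EuclideanSpace ℝ (Fin 3)) :
    ⟪a, y⟫ * ⟪b, y⟫ + ⟪a, z⟫ * ⟪b, z⟫ = ⟪a, b⟫ - ⟪a, x⟫ * ⟪b, x⟫ := by
  have := h.orthonormal.sum_inner_mul_inner_of_card_eq_finrank (by simp) a b
  simp only [Fin.sum_univ_three, Matrix.cons_val, real_inner_comm b] at this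
  linarith [real_inner_comm a b]

theorem real_inner_gram_det_nonneg {E : Type*} [NormedAddCommGroup E] [InnerProductSpace ℝ E]
    {u v w : E} (hu : ‖u‖ = 1) (hv : ‖v‖ = 1) (hw : ‖w‖ = 1) :
    0 ≤ 1 + 2 * ⟪u, v⟫ * ⟪u, w⟫ * ⟪v, w⟫ - ⟪u, v⟫ ^ 2 - ⟪u, w⟫ ^ 2 - ⟪v, w⟫ ^ 2 := by
  have huu : ⟪u, u⟫ = 1 := by simp [hu]
  have hvv : ⟪v, v⟫ = 1 := by simp [hv]
  have hww : ⟪w, w⟫ = 1 := by simp [hw]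
  -- Cauchy–Schwarz for the components of `v` and `w` orthogonal to `u`.
  have hcs := real_inner_mul_inner_self_le (v - ⟪u, v⟫ • u) (w - ⟪u, w⟫ • u)
  simp only [inner_sub_left, inner_sub_right, real_inner_smul_left, real_inner_smul_right,
    huu, hvv, hww, real_inner_comm u v, real_inner_comm u w] at hcs
  nlinarith [hcs]

theorem abs_two_mul_sub_mul_add_le_of_gram {k p a : ℝ} (hk : |k| ≤ 1)
    (hgram : 0 ≤ 1 + 2 * a * p * k - a ^ 2 - p ^ 2 - k ^ 2) :
    |2 * p * a - k * (p ^ 2 + a ^ 2)| ≤ 1 - k ^ 2 := by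
  obtain ⟨hk₁, hk₂⟩ := abs_le.mp hk
  rw [abs_le]
  constructor
  · nlinarith [mul_nonneg (by linarith : (0 : ℝ) ≤ 1 - k) (sq_nonneg (p + a))]
  · nlinarith [mul_nonneg (by linarith : (0 : ℝ) ≤ 1 + k) (sq_nonneg (p - a))]

theorem frect_neg (σ η μ : ℝ) (r x y w : EuclideanSpace ℝ (Fin 3)) :
    Frect σ η μ (-r) x y w = Frect σ η μ r x y w := by
  simp only [Frect, norm_neg, smul_neg, inner_neg_left, neg_mul_neg]

theorem IsONFrame.inner_mul_frect_add_inner_mul_frect {x y z : EuclideanSpace ℝ (Fin 3)}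
    (h : IsONFrame x y z) (σ η μ : ℝ) (r : EuclideanSpace ℝ (Fin 3))
    {w : EuclideanSpace ℝ (Fin 3)} (hw : ‖w‖ = 1) :
    ⟪w, y⟫ * Frect σ η μ r x y w + ⟪w, z⟫ * Frect σ η μ r x z w =
      σ * η * (⟪‖r‖⁻¹ • r, x⟫ * (⟪‖r‖⁻¹ • r, w⟫ - ⟪‖r‖⁻¹ • r, x⟫ * ⟪w, x⟫)) +
        μ * (1 - ⟪w, x⟫ ^ 2) := by
  have hu := h.inner_mul_inner_add_inner_mul_inner (‖r‖⁻¹ • r) w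
  have hww := h.inner_mul_inner_add_inner_mul_inner w w
  rw [real_inner_self_eq_norm_sq, hw, one_pow] at hww
  simp only [Frect]
  linear_combination σ * η * ⟪‖r‖⁻¹ • r, x⟫ * hu + μ * hww

theorem stmt11_general (x₁ y₁ z₁ x₂ y₂ z₂ : EuclideanSpace ℝ (Fin 3))
    (h1 : IsONFrame x₁ y₁ z₁) (h2 : IsONFrame x₂ y₂ z₂)
    (r : EuclideanSpace ℝ (Fin 3)) (hr : r ≠ 0)
    (σ : ℝ) (hσ : σ = -1 ∨ σ = 1)
    (η μ : ℝ) (hη : 0 < η) (hμ : η / 2 < μ) :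
    ⟪x₁, y₂⟫ * Frect σ η μ r x₂ y₂ x₁ +
    ⟪x₂, y₁⟫ * Frect σ η μ (-r) x₁ y₁ x₂ +
    ⟪x₁, z₂⟫ * Frect σ η μ r x₂ z₂ x₁ +
    ⟪x₂, z₁⟫ * Frect σ η μ (-r) x₁ z₁ x₂ ≥ 0 := by
  have half₁ := h2.inner_mul_frect_add_inner_mul_frect σ η μ r h1.1
  have half₂ := h1.inner_mul_frect_add_inner_mul_frect σ η μ r h2.1
  rw [← frect_neg, ← frect_neg σ η μ r x₁ z₁, real_inner_comm x₁ x₂] at half₂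
  set u := ‖r‖⁻¹ • r
  set S := 2 * ⟪u, x₂⟫ * ⟪u, x₁⟫ - ⟪x₁, x₂⟫ * (⟪u, x₂⟫ ^ 2 + ⟪u, x₁⟫ ^ 2)
  have hk : |⟪x₁, x₂⟫| ≤ 1 := by
    simpa [h1.1, h2.1] using abs_real_inner_le_norm x₁ x₂
  have hS : |S| ≤ 1 - ⟪x₁, x₂⟫ ^ 2 := abs_two_mul_sub_mul_add_le_of_gram hk
    (real_inner_gram_det_nonneg (norm_smul_inv_norm hr) h1.1 h2.1)
  have hσS : |σ * η * S| ≤ η * (1 - ⟪x₁, x₂⟫ ^ 2) := by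
    have hσ1 : |σ| = 1 := by rcases hσ with rfl | rfl <;> simp
    rw [abs_mul, abs_mul, hσ1, one_mul, abs_of_pos hη]
    exact mul_le_mul_of_nonneg_left hS hη.le
  have hμk : η / 2 * (1 - ⟪x₁, x₂⟫ ^ 2) ≤ μ * (1 - ⟪x₁, x₂⟫ ^ 2) :=
    mul_le_mul_of_nonneg_right hμ.le ((abs_nonneg S).trans hS)
  linarith [neg_abs_le (σ * η * S)]

theorem stmt11 (x₁ y₁ z₁ x₂ y₂ z₂ : EuclideanSpace ℝ (Fin 3))
    (h1 : IsONFrame x₁ y₁ z₁) (h2 : IsONFrame x₂ y₂ z₂)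
    (r : EuclideanSpace ℝ (Fin 3)) (hr : r ≠ 0)
    (σ : ℝ) (hσ : σ = -1 ∨ σ = 1)
    (η μ : ℝ) (hη : 0 < η) (hμ0 : 0 < μ) (hμ : η / 2 < μ) :
    ⟪x₁, y₂⟫ * Frect σ η μ r x₂ y₂ x₁ +
    ⟪x₂, y₁⟫ * Frect σ η μ (-r) x₁ y₁ x₂ +
    ⟪x₁, z₂⟫ * Frect σ η μ r x₂ z₂ x₁ +
    ⟪x₂, z₁⟫ * Frect σ η μ (-r) x₁ z₁ x₂ ≥ 0 :=
  stmt11_general x₁ y₁ z₁ x₂ y₂ z₂ h1 h2 r hr σ hσ η μ hη hμ
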